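/- Let Λ : (k, +) → ℂˣ be an additive character that is nontrivial on O and trivial on 𝔭. Let L₁, L₂ be lattices in V and let γ₁, γ₂ ∈ V be such that Λ(B(γ₁, x)) = Λ(B(γ₂, x)) for all x ∈ L₁ ∩ L₂. Then the cosets γ₁ + L₁* and γ₂ + L₂* have nonempty intersection: (γ₁ + L₁*) ∩ (γ₂ + L₂*) ≠ ∅. -/

import Mathlib

/-!
`O` is the ring of integers of a nonarchimedean local field `k` of characteristic zero
(a complete discrete valuation ring with finite residue field), `𝔭` its maximal ideal,
`V` a finite-dimensional `k`-vector space and `B` a nondegenerate symmetric bilinear form.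
A lattice is a finitely generated `O`-submodule of `V` spanning `V` over `k`, and the dual
of a lattice `L` is `L* = {y ∈ V | B(y, x) ∈ 𝔭 for all x ∈ L}`.
-/

section LatticeDuality

variable (O : Type*) [CommRing O] [IsDomain O] [IsDiscreteValuationRing O]
variable (k : Type*) [Field k] [Algebra O k] [IsFractionRing O k]

/-- The image in `k` of the maximal ideal `𝔭` of the ring of integers `O`. -/
def maxIdealImage : Submodule O k :=
  Submodule.map (Algebra.linearMap O k) (IsLocalRing.maximalIdeal O)

variable (V : Type*) [AddCommGroup V] [Module k V] [Module O V] [IsScalarTower O k V]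

/-- A lattice in `V`: a finitely generated `O`-submodule of `V` that spans `V` over `k`. -/
def IsLatticeIn (L : Submodule O V) : Prop :=
  L.FG ∧ Submodule.span k (L : Set V) = ⊤

/-- The dual lattice `L* = {y ∈ V | B(y, x) ∈ 𝔭 for all x ∈ L}`. -/
def dualLattice (B : V →ₗ[k] V →ₗ[k] k) (L : Submodule O V) : Submodule O V where
  carrier := {y : V | ∀ x ∈ L, B y x ∈ maxIdealImage O k}
  zero_mem' := by
    intro x hx
    simp only [map_zero, LinearMap.zero_apply]
    exact Submodule.zero_mem _
  add_mem' := by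
    intro a b ha hb x hx
    show B (a + b) x ∈ maxIdealImage O k
    rw [map_add, LinearMap.add_apply]
    exact Submodule.add_mem _ (ha x hx) (hb x hx)
  smul_mem' := by
    intro c y hy x hx
    show B (c • y) x ∈ maxIdealImage O k
    rw [← algebraMap_smul k c y, map_smul, LinearMap.smul_apply, algebraMap_smul]
    exact Submodule.smul_mem _ c (hy x hx)

/-!
Agreement of the two characters on `L₁ ∩ L₂` forces `B(γ₁ - γ₂, x) ∈ 𝔭` for every
`x ∈ L₁ ∩ L₂`: otherwise `O · B(γ₁ - γ₂, x) ⊇ O`, on which `Λ` is not trivial. Thus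
`γ₁ - γ₂ ∈ (L₁ ∩ L₂)*`, and it remains to show `(L₁ ∩ L₂)* = L₁* + L₂*`.

Since `𝔭 = ϖ O` for a uniformizer `ϖ`, the dual `L*` is the `O`-dual of `L` for the form
`ϖ⁻¹ B`. For a nondegenerate symmetric form, `O`-duality maps lattices to lattices, satisfies
`L** = L` (dual bases), and turns sums into intersections. Hence
`(L₁ ∩ L₂)* = (L₁** ∩ L₂**)* = (L₁* + L₂*)** = L₁* + L₂*`, and writing
`γ₁ - γ₂ = y₁ + y₂` with `yᵢ ∈ Lᵢ*` exhibits the common point `γ₁ - y₁ = γ₂ + y₂`.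
-/

section

variable {R K M : Type*} [CommRing R] [Field K] [Algebra R K]
  [AddCommGroup M] [Module K M] [Module R M] [IsScalarTower R K M]

theorem LinearMap.BilinForm.dualSubmodule_sup (B : LinearMap.BilinForm K M)
    (N₁ N₂ : Submodule R M) :
    B.dualSubmodule (N₁ ⊔ N₂) = B.dualSubmodule N₁ ⊓ B.dualSubmodule N₂ := by
  ext x
  have key : ∀ N : Submodule R M, x ∈ B.dualSubmodule N ↔
      N ≤ (1 : Submodule R K).comap ((B x).restrictScalars R) := fun _ => Iff.rfl
  rw [Submodule.mem_inf, key, key, key, sup_le_iff]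

variable [IsDomain R] [IsPrincipalIdealRing R] [IsFractionRing R K]

variable (K) in
theorem Submodule.IsLattice.eq_span_extendOfIsLattice (L : Submodule R M) [L.IsLattice K] :
    L = Submodule.span R (Set.range ((Module.Free.chooseBasis R L).extendOfIsLattice K)) := by
  let b := Module.Free.chooseBasis R L
  have hrange : Set.range (b.extendOfIsLattice K) = L.subtype '' Set.range b := by
    rw [← Set.range_comp]; ext; simp [b]
  rw [hrange, ← Submodule.map_span, b.span_eq, Submodule.map_top, Submodule.range_subtype]

namespace LinearMap.BilinForm

variable {B : LinearMap.BilinForm K M}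

theorem isLattice_dualSubmodule (hB : B.Nondegenerate) (L : Submodule R M) [L.IsLattice K] :
    (B.dualSubmodule L).IsLattice K := by
  classical
  rw [Submodule.IsLattice.eq_span_extendOfIsLattice K L, dualSubmodule_span_of_basis B hB]
  exact ⟨Submodule.fg_span (Set.finite_range _), by
    rw [Submodule.span_span_of_tower, Module.Basis.span_eq]⟩

theorem dualSubmodule_dualSubmodule_of_isLattice (hB : B.Nondegenerate) (hB' : B.IsSymm)
    (L : Submodule R M) [L.IsLattice K] :
    B.dualSubmodule (B.dualSubmodule L) = L := by
  rw [Submodule.IsLattice.eq_span_extendOfIsLattice K L,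
    dualSubmodule_dualSubmodule_of_basis B hB hB']

theorem dualSubmodule_inf_of_isLattice (hB : B.Nondegenerate) (hB' : B.IsSymm)
    (L₁ L₂ : Submodule R M) [L₁.IsLattice K] [L₂.IsLattice K] :
    B.dualSubmodule (L₁ ⊓ L₂) = B.dualSubmodule L₁ ⊔ B.dualSubmodule L₂ := by
  have := isLattice_dualSubmodule hB L₁
  have := isLattice_dualSubmodule hB L₂
  conv_lhs => rw [← dualSubmodule_dualSubmodule_of_isLattice hB hB' L₁,
    ← dualSubmodule_dualSubmodule_of_isLattice hB hB' L₂, ← dualSubmodule_sup]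
  exact dualSubmodule_dualSubmodule_of_isLattice hB hB' _

end LinearMap.BilinForm

end

open Pointwise in
theorem Submodule.vadd_inter_vadd_nonempty_of_sub_mem_sup {R M : Type*} [Ring R] [AddCommGroup M]
    [Module R M] {N₁ N₂ : Submodule R M} {γ₁ γ₂ : M} (h : γ₁ - γ₂ ∈ N₁ ⊔ N₂) :
    ((γ₁ +ᵥ (N₁ : Set M)) ∩ (γ₂ +ᵥ (N₂ : Set M))).Nonempty := by
  obtain ⟨y₁, hy₁, y₂, hy₂, hsum⟩ := Submodule.mem_sup.mp h
  refine ⟨γ₂ + y₂, Set.mem_vadd_set.mpr ⟨-y₁, N₁.neg_mem hy₁, ?_⟩,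
    Set.mem_vadd_set.mpr ⟨y₂, hy₂, rfl⟩⟩
  rw [vadd_eq_add, eq_sub_of_add_eq hsum]
  abel

section

variable {O k}

theorem exists_mul_eq_one_of_notMem_maxIdealImage {t : k} (ht : t ∉ maxIdealImage O k) :
    ∃ s : O, algebraMap O k s * t = 1 := by
  rcases ValuationRing.isInteger_or_isInteger O t with ⟨r, rfl⟩ | ⟨s, hs⟩
  · have hr : IsUnit r := by
      by_contra hr
      exact ht ⟨r, (IsLocalRing.mem_maximalIdeal r).mpr hr, rfl⟩
    exact ⟨↑hr.unit⁻¹, by rw [← map_mul, hr.val_inv_mul, map_one]⟩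
  · have ht0 : t ≠ 0 := by rintro rfl; exact ht (zero_mem _)
    exact ⟨s, by rw [hs, inv_mul_cancel₀ ht0]⟩

theorem mem_maxIdealImage_of_forall_apply_mul_eq_one {G : Type*} [One G] (Λ : k → G)
    (hΛO : ∃ a : O, Λ (algebraMap O k a) ≠ 1) {t : k}
    (h : ∀ a : O, Λ (algebraMap O k a * t) = 1) : t ∈ maxIdealImage O k := by
  by_contra ht
  obtain ⟨s, hs⟩ := exists_mul_eq_one_of_notMem_maxIdealImage ht
  obtain ⟨b, hb⟩ := hΛO
  apply hb
  simpa only [map_mul, mul_assoc, hs, mul_one] using h (b * s)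

theorem mem_maxIdealImage_iff {ϖ : O} (hϖ : Irreducible ϖ) {t : k} :
    t ∈ maxIdealImage O k ↔ (algebraMap O k ϖ)⁻¹ * t ∈ (1 : Submodule O k) := by
  have hϖ0 : algebraMap O k ϖ ≠ 0 :=
    (map_ne_zero_iff _ (IsFractionRing.injective O k)).mpr hϖ.ne_zero
  simp only [maxIdealImage, Submodule.mem_map, Submodule.mem_one, hϖ.maximalIdeal_eq,
    Ideal.mem_span_singleton', Algebra.linearMap_apply]
  constructor
  · rintro ⟨_, ⟨r, rfl⟩, rfl⟩
    exact ⟨r, by rw [map_mul]; field_simp⟩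
  · rintro ⟨r, hr⟩
    exact ⟨r * ϖ, ⟨r, rfl⟩, by rw [map_mul, hr]; field_simp⟩

variable {V}

theorem dualLattice_eq_dualSubmodule {ϖ : O} (hϖ : Irreducible ϖ) (B : V →ₗ[k] V →ₗ[k] k)
    (L : Submodule O V) :
    dualLattice O k V B L = LinearMap.BilinForm.dualSubmodule ((algebraMap O k ϖ)⁻¹ • B) L := by
  ext y
  exact forall₂_congr fun x _ => mem_maxIdealImage_iff hϖ

theorem sub_mem_dualLattice_of_forall_apply_eq {G : Type*} [Group G] (B : V →ₗ[k] V →ₗ[k] k)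
    (Λ : k → G) (hΛadd : ∀ a b : k, Λ (a + b) = Λ a * Λ b)
    (hΛO : ∃ a : O, Λ (algebraMap O k a) ≠ 1) (L : Submodule O V) {γ₁ γ₂ : V}
    (hagree : ∀ x ∈ L, Λ (B γ₁ x) = Λ (B γ₂ x)) :
    γ₁ - γ₂ ∈ dualLattice O k V B L := by
  intro x hx
  refine mem_maxIdealImage_of_forall_apply_mul_eq_one Λ hΛO fun a => ?_
  have hsplit : Λ (B γ₁ (a • x)) = Λ (B (γ₁ - γ₂) (a • x)) * Λ (B γ₂ (a • x)) := by
    rw [← hΛadd, map_sub, LinearMap.sub_apply, sub_add_cancel]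
  rwa [hagree _ (L.smul_mem a hx), right_eq_mul, ← algebraMap_smul k a x, map_smul,
    smul_eq_mul] at hsplit

end

open Pointwise in
theorem dualBlob_inter_nonempty
    (B : V →ₗ[k] V →ₗ[k] k)
    (hsymm : ∀ x y : V, B x y = B y x)
    (hnondeg : ∀ y : V, (∀ x : V, B y x = 0) → y = 0)
    (Λ : k → ℂˣ)
    (hΛadd : ∀ a b : k, Λ (a + b) = Λ a * Λ b)
    (hΛO : ∃ a : O, Λ (algebraMap O k a) ≠ 1)
    (L₁ L₂ : Submodule O V)
    (h₁ : IsLatticeIn O k V L₁) (h₂ : IsLatticeIn O k V L₂)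
    (γ₁ γ₂ : V)
    (hagree : ∀ x ∈ L₁ ⊓ L₂, Λ (B γ₁ x) = Λ (B γ₂ x)) :
    ((γ₁ +ᵥ (dualLattice O k V B L₁ : Set V)) ∩
        (γ₂ +ᵥ (dualLattice O k V B L₂ : Set V))).Nonempty := by
  obtain ⟨ϖ, hϖ⟩ := IsDiscreteValuationRing.exists_irreducible O
  have hϖ0 : (algebraMap O k ϖ)⁻¹ ≠ 0 :=
    inv_ne_zero <| (map_ne_zero_iff _ (IsFractionRing.injective O k)).mpr hϖ.ne_zero
  set B' : LinearMap.BilinForm k V := (algebraMap O k ϖ)⁻¹ • B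
  have hB'symm : B'.IsSymm := ⟨fun x y => by simp [B', hsymm x y]⟩
  have hB'nondeg : B'.Nondegenerate :=
    hB'symm.isRefl.nondegenerate_iff_separatingLeft.mpr fun y hy =>
      hnondeg y fun x => by simpa [B', hϖ0] using hy x
  have : L₁.IsLattice k := ⟨h₁.1, h₁.2⟩
  have : L₂.IsLattice k := ⟨h₂.1, h₂.2⟩
  have hδ := sub_mem_dualLattice_of_forall_apply_eq B Λ hΛadd hΛO (L₁ ⊓ L₂) hagree
  rw [dualLattice_eq_dualSubmodule hϖ,
    LinearMap.BilinForm.dualSubmodule_inf_of_isLattice hB'nondeg hB'symm] at hδ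
  simpa only [dualLattice_eq_dualSubmodule hϖ] using
    Submodule.vadd_inter_vadd_nonempty_of_sub_mem_sup hδ

end LatticeDuality
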